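/- For all t ≥ 1, one has ψ(t) ≤ 4(t − 1)², where ψ(t) = (1/2)(2t² + 1/t² − 5) + e^{1/t−1}. -/
import Mathlib

lemma exp_quad_le {u : ℝ} (hu : u ≤ 0) : Real.exp u ≤ 1 + u + u^2/2 := by
  have hd : ∀ x : ℝ, HasDerivAt (fun u : ℝ => 1 + u + u^2/2 - Real.exp u)
      (1 + x - Real.exp x) x := by
    intro x
    have h1 : HasDerivAt (fun u : ℝ => 1 + u + u^2/2 - Real.exp u)
        (0 + 1 + (↑2 * x ^ (2-1)) / 2 - Real.exp x) x := by
      exact (((hasDerivAt_const x (1:ℝ)).add (hasDerivAt_id x)).add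
        ((hasDerivAt_pow 2 x).div_const 2)).sub (Real.hasDerivAt_exp x)
    convert h1 using 1
    push_cast
    ring
  have h : AntitoneOn (fun u : ℝ => 1 + u + u^2/2 - Real.exp u) (Set.Iic 0) := by
    apply antitoneOn_of_deriv_nonpos (convex_Iic 0)
    · exact (Continuous.continuousOn (by fun_prop))
    · exact fun x _ => (hd x).differentiableAt.differentiableWithinAt
    · intro x hx
      rw [(hd x).deriv]
      nlinarith [Real.add_one_le_exp x]
  have := h (Set.mem_Iic.2 hu) (Set.mem_Iic.2 le_rfl) hu
  simp only [Real.exp_zero] at this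
  nlinarith [this]

noncomputable def psi (t : ℝ) : ℝ :=
  (1/2) * (2*t^2 + 1/t^2 - 5) + Real.exp (1/t - 1)

theorem stmt_11 : ∀ t : ℝ, 1 ≤ t → psi t ≤ 4 * (t - 1)^2 := by
  intro t ht
  have ht0 : (0:ℝ) < t := by linarith
  have hu : 1/t - 1 ≤ 0 := by
    have : 1/t ≤ 1 := by rw [div_le_one ht0]; exact ht
    linarith
  have he := exp_quad_le hu
  unfold psi
  have key : 4 * (t - 1)^2 - ((1/2) * (2*t^2 + 1/t^2 - 5) + (1 + (1/t-1) + (1/t-1)^2/2))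
      = (2*(t-1)^2*(3*t+1)*(t-1)) / (2*t^2) := by
    field_simp
    ring
  have hnn : 0 ≤ (2*(t-1)^2*(3*t+1)*(t-1)) / (2*t^2) := by
    apply div_nonneg (by nlinarith) (by positivity)
  linarith
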